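/- arXiv:2202.05569 — 5 statements merged into one kernel-verified Lean document; each statement's English description precedes it below -/
import Mathlib

section
/- Let a ∈ ℝ, u ∈ ℂ, b > 0, and set λ = a²·|u|²/b². Define M(λ) := ∑_{j=0}^∞ (Γ(j + 3/2)/Γ(3/2)) · λ^j/(j!)². Then ∫_{ℝ²} |a·u + b·(x + y·i)| · π⁻¹ · e^{−(x² + y²)} d(x, y) = (b·√π/2) · e^{−λ} · M(λ). -/
/-!
Translating by `w = a u / b` and scaling by `b` reduce the claim to `∫ ‖z‖ e^{-‖z - w‖²}` over `ℂ`.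
In polar coordinates `z = r e^{iθ}` the law of cosines turns the Gaussian into
`e^{-r²} e^{-‖w‖²} e^{2 r ‖w‖ cos (θ - arg w)}`, and the angular integral is the modified Bessel
integral `∫_{-π}^{π} e^{t cos θ} dθ = 2π ∑ (t/2)^{2j} / (j!)²`, obtained by expanding the exponential
and using the Wallis integrals of `cos^{2j}`. What remains is a series of nonnegative functions of
`r`, which may be integrated term by term, and `∫_0^∞ r^{2j+2} e^{-r²} dr = Γ(j + 3/2) / 2`.
-/

open MeasureTheory Real

/-- The confluent hypergeometric function `₁F₁(3/2; 1; l)`. -/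
noncomputable def hyperM (l : ℝ) : ℝ :=
  ∑' j : ℕ, (Real.Gamma ((j : ℝ) + 3 / 2) / Real.Gamma (3 / 2)) * l ^ j
    / ((Nat.factorial j : ℝ)) ^ 2

open Set

section Tonelli

variable {α β : Type*} [MeasurableSpace α] [MeasurableSpace β] {μ : Measure α} {ν : Measure β}

theorem integral_tsum_of_nonneg {f : ℕ → α → ℝ} (hf : ∀ n, Integrable (f n) μ)
    (hf_nonneg : ∀ n x, 0 ≤ f n x) (hf_sum : ∀ x, Summable (f · x)) :
    ∫ x, ∑' n, f n x ∂μ = ∑' n, ∫ x, f n x ∂μ := by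
  have hofReal (n : ℕ) : ∫⁻ x, ENNReal.ofReal (f n x) ∂μ = ENNReal.ofReal (∫ x, f n x ∂μ) :=
    (ofReal_integral_eq_lintegral_ofReal (hf n) (.of_forall (hf_nonneg n))).symm
  rw [integral_eq_lintegral_of_nonneg_ae (.of_forall fun x => tsum_nonneg (hf_nonneg · x))
      (AEMeasurable.tsum fun n => (hf n).aemeasurable).aestronglyMeasurable]
  simp_rw [ENNReal.ofReal_tsum_of_nonneg (hf_nonneg · _) (hf_sum _)]
  rw [lintegral_tsum fun n => (hf n).aemeasurable.ennreal_ofReal,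
    ENNReal.tsum_toReal_eq fun n => by simp [hofReal]]
  exact tsum_congr fun n => by rw [hofReal, ENNReal.toReal_ofReal (integral_nonneg (hf_nonneg n))]

theorem integral_prod_of_nonneg [SFinite ν] {f : α × β → ℝ} (hf : Measurable f)
    (hf_nonneg : 0 ≤ f) (hf_int : ∀ x, Integrable (fun y => f (x, y)) ν) :
    ∫ z, f z ∂μ.prod ν = ∫ x, ∫ y, f (x, y) ∂ν ∂μ := by
  rw [integral_eq_lintegral_of_nonneg_ae (.of_forall hf_nonneg) hf.aestronglyMeasurable,
    lintegral_prod _ hf.ennreal_ofReal.aemeasurable,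
    integral_eq_lintegral_of_nonneg_ae (f := fun x => ∫ y, f (x, y) ∂ν)
      (.of_forall fun x => integral_nonneg fun y => hf_nonneg _)
      hf.stronglyMeasurable.integral_prod_right'.aestronglyMeasurable]
  congr 1
  exact lintegral_congr fun x =>
    (ofReal_integral_eq_lintegral_ofReal (hf_int x) (.of_forall fun y => hf_nonneg _)).symm

end Tonelli

theorem prod_range_wallis_eq (j : ℕ) :
    ∏ i ∈ Finset.range j, (2 * (i : ℝ) + 1) / (2 * i + 2)
      = (2 * j).factorial / (4 ^ j * (j.factorial : ℝ) ^ 2) := by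
  induction j with
  | zero => simp
  | succ k ih =>
    rw [Finset.prod_range_succ, ih, show 2 * (k + 1) = 2 * k + 1 + 1 by ring,
      Nat.factorial_succ, Nat.factorial_succ, Nat.factorial_succ]
    push_cast
    field_simp
    ring

theorem integral_cos_pow_neg_pi_pi (n : ℕ) :
    ∫ θ in -π..π, cos θ ^ n = 2 * (1 + (-1) ^ n) * ∫ θ in 0..π / 2, cos θ ^ n := by
  have hint (a b : ℝ) : IntervalIntegrable (fun θ => cos θ ^ n) volume a b :=
    (continuous_cos.pow n).intervalIntegrable a b
  have hneg : ∫ θ in -π..0, cos θ ^ n = ∫ θ in 0..π, cos θ ^ n := by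
    simpa using (intervalIntegral.integral_comp_neg (a := 0) (b := π) (fun θ => cos θ ^ n)).symm
  have hreflect : ∫ θ in π / 2..π, cos θ ^ n = (-1) ^ n * ∫ θ in 0..π / 2, cos θ ^ n := by
    have h := intervalIntegral.integral_comp_sub_left (a := 0) (b := π / 2)
      (fun θ => cos θ ^ n) π
    simp only [cos_pi_sub, neg_pow (cos _), intervalIntegral.integral_const_mul, sub_zero,
      show π - π / 2 = π / 2 by ring] at h
    exact h.symm
  rw [← intervalIntegral.integral_add_adjacent_intervals (hint _ 0) (hint 0 _), hneg,
    ← intervalIntegral.integral_add_adjacent_intervals (hint 0 (π / 2)) (hint _ π), hreflect]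
  ring

theorem integral_cos_pow_two_mul_neg_pi_pi (j : ℕ) :
    ∫ θ in -π..π, cos θ ^ (2 * j)
      = 2 * π * ((2 * j).factorial / (4 ^ j * (j.factorial : ℝ) ^ 2)) := by
  rw [integral_cos_pow_neg_pi_pi, EulerSine.integral_cos_pow_eq, integral_sin_pow_even,
    prod_range_wallis_eq, pow_mul]
  norm_num
  ring

theorem integral_cos_pow_two_mul_add_one_neg_pi_pi (j : ℕ) :
    ∫ θ in -π..π, cos θ ^ (2 * j + 1) = 0 := by
  rw [integral_cos_pow_neg_pi_pi, pow_succ, pow_mul]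
  norm_num

theorem hasSum_integral_exp_mul_cos (t : ℝ) :
    HasSum (fun j : ℕ => 2 * π * ((t / 2) ^ (2 * j) / (j.factorial : ℝ) ^ 2))
      (∫ θ in -π..π, exp (t * cos θ)) := by
  have hexp : HasSum (fun n : ℕ => ∫ θ in -π..π, (t * cos θ) ^ n / n.factorial)
      (∫ θ in -π..π, exp (t * cos θ)) := by
    refine intervalIntegral.hasSum_integral_of_dominated_convergence
      (fun n _ => |t| ^ n / n.factorial)
      (fun n => (((continuous_const.mul continuous_cos).pow n).div_const _).aestronglyMeasurable)
      (fun n => .of_forall fun θ _ => ?_) (.of_forall fun _ _ => summable_pow_div_factorial _)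
      intervalIntegrable_const (.of_forall fun θ _ => ?_)
    · rw [norm_div, norm_pow, norm_mul, Real.norm_eq_abs, Real.norm_eq_abs, Real.norm_natCast]
      gcongr
      exact mul_le_of_le_one_right (abs_nonneg t) (abs_cos_le_one θ)
    · rw [exp_eq_exp_ℝ]
      exact NormedSpace.expSeries_div_hasSum_exp _
  convert ((mul_right_injective₀ (two_ne_zero (α := ℕ))).hasSum_iff ?_).mpr hexp using 2 with j
  · simp only [Function.comp_apply, mul_pow, intervalIntegral.integral_div,
      intervalIntegral.integral_const_mul, integral_cos_pow_two_mul_neg_pi_pi]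
    have := (2 * j).factorial_pos
    rw [div_pow, pow_mul (2 : ℝ)]
    field_simp
    norm_num
  · rintro n hn
    obtain ⟨j, rfl⟩ : Odd n := by simpa [eq_comm] using hn
    simp [mul_pow, integral_cos_pow_two_mul_add_one_neg_pi_pi]

theorem Function.Periodic.intervalIntegral_comp_sub_right {E : Type*} [NormedAddCommGroup E]
    [NormedSpace ℝ E] {f : ℝ → E} {T : ℝ} (hf : Function.Periodic f T) (t d : ℝ) :
    ∫ x in t..t + T, f (x - d) = ∫ x in t..t + T, f x := by
  rw [intervalIntegral.integral_comp_sub_right, ← sub_add_eq_add_sub,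
    hf.intervalIntegral_add_eq (t - d) t]

theorem hasSum_integral_exp_mul_cos_sub (t φ : ℝ) :
    HasSum (fun j : ℕ => 2 * π * ((t / 2) ^ (2 * j) / (j.factorial : ℝ) ^ 2))
      (∫ θ in -π..π, exp (t * cos (θ - φ))) := by
  have hper : Function.Periodic (fun θ => exp (t * cos θ)) (2 * π) := fun θ => by
    simp only [cos_add_two_pi]
  have h := hper.intervalIntegral_comp_sub_right (-π) φ
  rw [show -π + 2 * π = π by ring] at h
  exact h ▸ hasSum_integral_exp_mul_cos t

theorem integrableOn_pow_mul_exp_neg_sq (n : ℕ) :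
    IntegrableOn (fun r : ℝ => r ^ n * exp (-r ^ 2)) (Ioi 0) := by
  simpa [rpow_natCast, rpow_two] using
    integrableOn_rpow_mul_exp_neg_rpow (s := n) (by linarith [n.cast_nonneg (α := ℝ)]) two_pos

theorem integral_pow_mul_exp_neg_sq (n : ℕ) :
    ∫ r in Ioi 0, r ^ n * exp (-r ^ 2) = Gamma ((n + 1) / 2) / 2 := by
  have h := integral_rpow_mul_exp_neg_rpow (q := n) two_pos (by linarith [n.cast_nonneg (α := ℝ)])
  simp only [rpow_natCast, rpow_two] at h
  rw [h]
  ring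

theorem Real.Gamma_three_halves : Gamma (3 / 2) = √π / 2 := by
  rw [show (3 / 2 : ℝ) = 1 / 2 + 1 by norm_num, Gamma_add_one (by norm_num), Gamma_one_half_eq]
  ring

theorem Complex.sq_norm_polarCoord_symm_sub (r θ : ℝ) (w : ℂ) :
    ‖Complex.polarCoord.symm (r, θ) - w‖ ^ 2
      = r ^ 2 + ‖w‖ ^ 2 - 2 * r * ‖w‖ * Real.cos (θ - w.arg) := by
  set s := ‖w‖
  set φ := w.arg
  have hw : w = s * (cos φ + sin φ * Complex.I) := (Complex.norm_mul_cos_add_sin_mul_I w).symm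
  rw [hw, Complex.sq_norm, Complex.normSq_apply, Complex.polarCoord_symm_apply, Real.cos_sub]
  simp only [Complex.sub_re, Complex.sub_im, Complex.mul_re, Complex.mul_im, Complex.add_re,
    Complex.add_im, Complex.ofReal_re, Complex.ofReal_im, Complex.cos_ofReal_re,
    Complex.sin_ofReal_re, Complex.cos_ofReal_im, Complex.sin_ofReal_im, Complex.I_re,
    Complex.I_im]
  linear_combination r ^ 2 * Real.sin_sq_add_cos_sq θ + s ^ 2 * Real.sin_sq_add_cos_sq φ

theorem hasSum_integral_sq_mul_exp_neg_sq_mul_exp_cos (r s φ : ℝ) :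
    HasSum
      (fun j : ℕ => 2 * π * ((s ^ 2) ^ j / (j.factorial : ℝ) ^ 2) * (r ^ (2 * j + 2) * exp (-r ^ 2)))
      (∫ θ in Ioo (-π) π, r ^ 2 * exp (-r ^ 2) * exp (2 * r * s * cos (θ - φ))) := by
  rw [integral_const_mul, ← integral_Ioc_eq_integral_Ioo,
    ← intervalIntegral.integral_of_le (by linarith [pi_pos])]
  refine ((hasSum_integral_exp_mul_cos_sub (2 * r * s) φ).mul_left _).congr_fun fun j => ?_
  rw [show 2 * r * s / 2 = r * s by ring, mul_pow, pow_add, pow_mul, pow_mul]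
  ring

theorem integral_sq_mul_exp_neg_sq_mul_exp_cos (s φ : ℝ) :
    ∫ p in Ioi 0 ×ˢ Ioo (-π) π, p.1 ^ 2 * exp (-p.1 ^ 2) * exp (2 * p.1 * s * cos (p.2 - φ))
      = π * Gamma (3 / 2) * hyperM (s ^ 2) := by
  have hcont : Continuous fun p : ℝ × ℝ =>
      p.1 ^ 2 * exp (-p.1 ^ 2) * exp (2 * p.1 * s * cos (p.2 - φ)) := by fun_prop
  have hangular (r : ℝ) := hasSum_integral_sq_mul_exp_neg_sq_mul_exp_cos r s φ
  have hradial (j : ℕ) :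
      ∫ r in Ioi 0, 2 * π * ((s ^ 2) ^ j / (j.factorial : ℝ) ^ 2) * (r ^ (2 * j + 2) * exp (-r ^ 2))
        = π * Gamma (3 / 2) * (Gamma (j + 3 / 2) / Gamma (3 / 2) * (s ^ 2) ^ j
            / (j.factorial : ℝ) ^ 2) := by
    rw [integral_const_mul, integral_pow_mul_exp_neg_sq]
    have := Gamma_pos_of_pos (show (0 : ℝ) < 3 / 2 by norm_num)
    push_cast
    field_simp
    ring_nf
  rw [Measure.volume_eq_prod, ← Measure.prod_restrict,
    integral_prod_of_nonneg hcont.measurable (fun p => by positivity)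
      fun r => (hcont.comp (Continuous.prodMk_right r)).integrableOn_Icc.mono_set Ioo_subset_Icc_self]
  simp_rw [fun r => (hangular r).tsum_eq.symm]
  rw [integral_tsum_of_nonneg (fun j => (integrableOn_pow_mul_exp_neg_sq _).const_mul _)
    (fun j r => mul_nonneg (by positivity)
      (mul_nonneg (Even.pow_nonneg ⟨j + 1, by ring⟩ r) (exp_pos _).le))
    (fun r => (hangular r).summable)]
  simp_rw [hradial, tsum_mul_left, hyperM]

theorem integral_norm_mul_exp_neg_sq_norm_sub (w : ℂ) :
    ∫ z : ℂ, ‖z‖ * exp (-‖z - w‖ ^ 2)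
      = π * Gamma (3 / 2) * exp (-‖w‖ ^ 2) * hyperM (‖w‖ ^ 2) := by
  rw [← Complex.integral_comp_polarCoord_symm, mul_right_comm,
    ← integral_sq_mul_exp_neg_sq_mul_exp_cos ‖w‖ w.arg, ← integral_mul_const]
  refine setIntegral_congr_fun polarCoord.open_target.measurableSet ?_
  rintro ⟨r, θ⟩ ⟨hr, -⟩
  have hexp : exp (-(r ^ 2 + ‖w‖ ^ 2 - 2 * r * ‖w‖ * cos (θ - w.arg)))
      = exp (-‖w‖ ^ 2) * (exp (-r ^ 2) * exp (2 * r * ‖w‖ * cos (θ - w.arg))) := by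
    rw [← exp_add, ← exp_add]
    ring_nf
  dsimp only
  rw [smul_eq_mul, Complex.norm_polarCoord_symm, abs_of_pos hr,
    Complex.sq_norm_polarCoord_symm_sub, hexp]
  ring

theorem integral_norm_add_mul_exp_neg_sq_norm (w : ℂ) :
    ∫ z : ℂ, ‖w + z‖ * (π⁻¹ * exp (-‖z‖ ^ 2))
      = Gamma (3 / 2) * exp (-‖w‖ ^ 2) * hyperM (‖w‖ ^ 2) := by
  rw [← integral_sub_right_eq_self _ w]
  simp only [add_sub_cancel, mul_left_comm ‖_‖]
  rw [integral_const_mul, integral_norm_mul_exp_neg_sq_norm_sub]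
  field_simp [pi_ne_zero]

/-- Eq. (48) of the paper: the first absolute moment of a Rician magnitude.
If `v` is a standard complex Gaussian (density `π⁻¹·e^{−(x²+y²)}` on `ℝ²`), then
`E|a·u + b·v| = (b·√π/2)·e^{−λ}·₁F₁(3/2;1;λ)` with `λ = a²|u|²/b²`. -/
theorem rician_first_moment (a : ℝ) (u : ℂ) (b : ℝ) (hb : 0 < b) :
    ∫ p : ℝ × ℝ,
        ‖(a : ℂ) * u + (b : ℂ) * ((p.1 : ℂ) + (p.2 : ℂ) * Complex.I)‖
          * (π⁻¹ * Real.exp (-(p.1 ^ 2 + p.2 ^ 2)))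
      = (b * Real.sqrt π / 2) * Real.exp (-(a ^ 2 * ‖u‖ ^ 2 / b ^ 2))
          * hyperM (a ^ 2 * ‖u‖ ^ 2 / b ^ 2) := by
  have hb' : (b : ℂ) ≠ 0 := Complex.ofReal_ne_zero.mpr hb.ne'
  have hscale (z : ℂ) : ‖(a : ℂ) * u + b * z‖ = b * ‖a * u / b + z‖ := by
    rw [show (a : ℂ) * u + b * z = b * (a * u / b + z) by field_simp, norm_mul,
      Complex.norm_real, Real.norm_of_nonneg hb.le]
  have hnorm : ‖(a : ℂ) * u / b‖ ^ 2 = a ^ 2 * ‖u‖ ^ 2 / b ^ 2 := by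
    rw [norm_div, norm_mul, Complex.norm_real, Complex.norm_real, div_pow, mul_pow,
      Real.norm_eq_abs, Real.norm_eq_abs, sq_abs, sq_abs]
  have hsq (z : ℂ) : z.re ^ 2 + z.im ^ 2 = ‖z‖ ^ 2 := by
    rw [Complex.sq_norm, Complex.normSq_apply]
    ring
  rw [← Complex.volume_preserving_equiv_real_prod.integral_comp']
  simp only [Complex.measurableEquivRealProd_apply, Complex.re_add_im, hsq, hscale, mul_assoc]
  rw [integral_const_mul, integral_norm_add_mul_exp_neg_sq_norm, hnorm, Gamma_three_halves]
  ring
end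

section
/- Let R > 0 and h > 0, and define g : [0, R] → ℝ by g(r) := 1 + (r² − R·r + h²)/√((r² + h²)·((R − r)² + h²)). Then g is strictly decreasing on [0, R/2] and strictly increasing on [R/2, R]. -/
/-!
Since `(r² + h²)((R − r)² + h²) = (r² − R r + h²)² + (h R)²`, the angular factor is
`1 + φ (r² − R r + h²)` with `φ u = u / √(u² + (h R)²)`. The map `φ` is odd and strictly
increasing, and the quadratic `r² − R r + h²` decreases up to its vertex `R / 2` and increases after it.
-/

open Real Set

theorem sq_add_sq_mul_sub_sq_add_sq (R h r : ℝ) :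
    (r ^ 2 + h ^ 2) * ((R - r) ^ 2 + h ^ 2) = (r ^ 2 - R * r + h ^ 2) ^ 2 + h ^ 2 * R ^ 2 := by
  ring

section DivSqrt

variable {c : ℝ}

theorem strictMonoOn_div_sqrt_sq_add (hc : 0 < c) :
    StrictMonoOn (fun u : ℝ => u / √(u ^ 2 + c)) (Ici 0) := by
  intro u (hu : 0 ≤ u) v (hv : 0 ≤ v) huv
  have hsu : 0 < √(u ^ 2 + c) := sqrt_pos.2 (by positivity)
  have hsv : 0 < √(v ^ 2 + c) := sqrt_pos.2 (by positivity)
  show u / √(u ^ 2 + c) < v / √(v ^ 2 + c)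
  have hu' : u * √(v ^ 2 + c) = √(u ^ 2 * (v ^ 2 + c)) := by
    rw [sqrt_mul (sq_nonneg u), sqrt_sq hu]
  have hv' : v * √(u ^ 2 + c) = √(v ^ 2 * (u ^ 2 + c)) := by
    rw [sqrt_mul (sq_nonneg v), sqrt_sq hv]
  rw [div_lt_div_iff₀ hsu hsv, hu', hv']
  exact sqrt_lt_sqrt (by positivity) (by nlinarith [pow_lt_pow_left₀ huv hu two_ne_zero])

theorem strictMono_div_sqrt_sq_add (hc : 0 < c) :
    StrictMono fun u : ℝ => u / √(u ^ 2 + c) :=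
  strictMono_of_odd_strictMonoOn_nonneg (fun u => by simp only [neg_sq, neg_div])
    (strictMonoOn_div_sqrt_sq_add hc)

end DivSqrt

section Quadratic

variable (R c : ℝ)

theorem strictAntiOn_sq_sub_mul_add :
    StrictAntiOn (fun r : ℝ => r ^ 2 - R * r + c) (Iic (R / 2)) := by
  intro a _ b (hb : b ≤ R / 2) hab
  nlinarith

theorem strictMonoOn_sq_sub_mul_add :
    StrictMonoOn (fun r : ℝ => r ^ 2 - R * r + c) (Ici (R / 2)) := by
  intro a (ha : R / 2 ≤ a) b _ hab
  nlinarith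

end Quadratic

/-- Monotonicity in `r` of the rotation-optimized angular factor
`g(r) = 1 + (r² − R·r + h²)/√((r²+h²)·((R−r)²+h²))` (Appendix C, eq. (52)):
`g` is strictly decreasing on `[0, R/2]` and strictly increasing on `[R/2, R]`. -/
theorem angular_factor_r_monotonicity (R h : ℝ) (hR : 0 < R) (hh : 0 < h) :
    StrictAntiOn
        (fun r : ℝ => 1 + (r ^ 2 - R * r + h ^ 2)
          / Real.sqrt ((r ^ 2 + h ^ 2) * ((R - r) ^ 2 + h ^ 2)))
        (Set.Icc 0 (R / 2))
      ∧ StrictMonoOn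
        (fun r : ℝ => 1 + (r ^ 2 - R * r + h ^ 2)
          / Real.sqrt ((r ^ 2 + h ^ 2) * ((R - r) ^ 2 + h ^ 2)))
        (Set.Icc (R / 2) R) := by
  have hφ := strictMono_div_sqrt_sq_add (c := h ^ 2 * R ^ 2) (by positivity)
  simp only [sq_add_sq_mul_sub_sq_add_sq]
  exact ⟨((hφ.comp_strictAntiOn (strictAntiOn_sq_sub_mul_add R (h ^ 2))).mono
      Icc_subset_Iic_self).const_add 1,
    ((hφ.comp_strictMonoOn (strictMonoOn_sq_sub_mul_add R (h ^ 2))).mono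
      Icc_subset_Ici_self).const_add 1⟩
end

section
/- Let R > 0 and h > 0 with R > 2h, and set r₁ = (R − √(R² − 4h²))/2. Define ν : [0, R] → ℝ by ν(r) := 1/((r² + h²)·((R − r)² + h²)). Then ν is strictly increasing on [0, r₁] and strictly decreasing on [r₁, R/2]. -/
/-!
The denominator `g(r) = (r² + h²)((R − r)² + h²)` has derivative `−2(R − 2r)(r² − Rr + h²)`,
and `r² − Rr + h² = (r − r₁)(r − r₂)` with `r₁ ≤ R/2 ≤ r₂` the roots `(R ∓ √(R² − 4h²))/2`.
Hence `g` decreases strictly up to `r₁` and increases strictly on `[r₁, R/2]`, and since `g > 0`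
its reciprocal `ν` does the opposite.
-/

open Real Set

namespace Pathloss

def denom (R h r : ℝ) : ℝ := (r ^ 2 + h ^ 2) * ((R - r) ^ 2 + h ^ 2)

variable {R h : ℝ}

theorem denom_pos (hh : h ≠ 0) (r : ℝ) : 0 < denom R h r := by
  unfold denom
  positivity

theorem hasDerivAt_denom (x : ℝ) :
    HasDerivAt (denom R h) (-2 * (R - 2 * x) * (x ^ 2 - R * x + h ^ 2)) x := by
  have hleft : HasDerivAt (fun r : ℝ => r ^ 2 + h ^ 2) (2 * x) x := by
    simpa using (hasDerivAt_pow 2 x).add_const (h ^ 2)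
  have hright : HasDerivAt (fun r : ℝ => (R - r) ^ 2 + h ^ 2) (-(2 * (R - x))) x := by
    simpa using (((hasDerivAt_id x).const_sub R).pow 2).add_const (h ^ 2)
  exact (hleft.mul hright).congr_deriv (by ring)

theorem sq_sub_mul_add_sq_eq (hdisc : 4 * h ^ 2 ≤ R ^ 2) (x : ℝ) :
    x ^ 2 - R * x + h ^ 2
      = (x - (R - √(R ^ 2 - 4 * h ^ 2)) / 2) * (x - (R + √(R ^ 2 - 4 * h ^ 2)) / 2) := by
  linear_combination (1 / 4 : ℝ) * sq_sqrt (sub_nonneg.mpr hdisc)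

theorem denom_strictAntiOn (hdisc : 4 * h ^ 2 ≤ R ^ 2) :
    StrictAntiOn (denom R h) (Iic ((R - √(R ^ 2 - 4 * h ^ 2)) / 2)) := by
  refine strictAntiOn_of_deriv_neg (convex_Iic _) (by unfold denom; fun_prop) fun x hx => ?_
  rw [interior_Iic, mem_Iio] at hx
  have hs := sqrt_nonneg (R ^ 2 - 4 * h ^ 2)
  have hquad : 0 < x ^ 2 - R * x + h ^ 2 := by
    rw [sq_sub_mul_add_sq_eq hdisc]
    exact mul_pos_of_neg_of_neg (by linarith) (by linarith)
  rw [(hasDerivAt_denom x).deriv]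
  nlinarith [mul_pos (by linarith : 0 < R - 2 * x) hquad]

theorem denom_strictMonoOn (hdisc : 4 * h ^ 2 ≤ R ^ 2) :
    StrictMonoOn (denom R h) (Icc ((R - √(R ^ 2 - 4 * h ^ 2)) / 2) (R / 2)) := by
  refine strictMonoOn_of_deriv_pos (convex_Icc _ _) (by unfold denom; fun_prop) fun x hx => ?_
  rw [interior_Icc, mem_Ioo] at hx
  have hs := sqrt_nonneg (R ^ 2 - 4 * h ^ 2)
  have hquad : x ^ 2 - R * x + h ^ 2 < 0 := by
    rw [sq_sub_mul_add_sq_eq hdisc]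
    exact mul_neg_of_pos_of_neg (by linarith) (by linarith)
  rw [(hasDerivAt_denom x).deriv]
  nlinarith [mul_neg_of_pos_of_neg (by linarith : 0 < R - 2 * x) hquad]

end Pathloss

theorem pathloss_factor_r_monotonicity_general (R h : ℝ) (hh : 0 < h)
    (hRh : 2 * h < R) :
    StrictMonoOn
        (fun r : ℝ => 1 / ((r ^ 2 + h ^ 2) * ((R - r) ^ 2 + h ^ 2)))
        (Set.Icc 0 ((R - Real.sqrt (R ^ 2 - 4 * h ^ 2)) / 2))
      ∧ StrictAntiOn
        (fun r : ℝ => 1 / ((r ^ 2 + h ^ 2) * ((R - r) ^ 2 + h ^ 2)))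
        (Set.Icc ((R - Real.sqrt (R ^ 2 - 4 * h ^ 2)) / 2) (R / 2)) := by
  have hdisc : 4 * h ^ 2 ≤ R ^ 2 := by nlinarith
  have hmaps : ∀ s : Set ℝ, MapsTo (Pathloss.denom R h) s {r | 0 < r} :=
    fun _ r _ => Pathloss.denom_pos hh.ne' r
  simp only [one_div]
  constructor
  · exact strictAntiOn_inv_pos.comp
      ((Pathloss.denom_strictAntiOn hdisc).mono Icc_subset_Iic_self) (hmaps _)
  · exact strictAntiOn_inv_pos.comp_strictMonoOn (Pathloss.denom_strictMonoOn hdisc) (hmaps _)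

/-- Monotonicity in `r` of the path-loss factor
`ν(r) = 1/((r²+h²)·((R−r)²+h²))` in the low-altitude regime `R > 2h`
(Appendix C, eq. (53)): with `r₁ = (R − √(R² − 4h²))/2`, `ν` is strictly
increasing on `[0, r₁]` and strictly decreasing on `[r₁, R/2]`. -/
theorem pathloss_factor_r_monotonicity (R h : ℝ) (hR : 0 < R) (hh : 0 < h)
    (hRh : 2 * h < R) :
    StrictMonoOn
        (fun r : ℝ => 1 / ((r ^ 2 + h ^ 2) * ((R - r) ^ 2 + h ^ 2)))
        (Set.Icc 0 ((R - Real.sqrt (R ^ 2 - 4 * h ^ 2)) / 2))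
      ∧ StrictAntiOn
        (fun r : ℝ => 1 / ((r ^ 2 + h ^ 2) * ((R - r) ^ 2 + h ^ 2)))
        (Set.Icc ((R - Real.sqrt (R ^ 2 - 4 * h ^ 2)) / 2) (R / 2)) :=
  pathloss_factor_r_monotonicity_general R h hh hRh
end

section
/- Let R > 0 and 0 ≤ r ≤ R. Then the map h ↦ 1 + (r² − R·r + h²)/√((r² + h²)·((R − r)² + h²)) is strictly increasing on (0, ∞). -/
/-!
For `N = a + h²`, `P = b + h²`, `Q = c + h²` the derivative of `N / √(PQ)` is
`h · ((c - a) P + (b - a) Q) / √(PQ)³`. With `a = r² - Rr`, `b = r²`, `c = (R - r)²` we have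
`b - a = Rr ≥ 0` and `c - a = R(R - r) ≥ 0`, and the bracket equals `R² (h² + r(R - r)) > 0`.
-/

open Real

theorem hasDerivAt_div_sqrt_mul_sq_add {a b c x : ℝ} (hx : 0 < (b + x ^ 2) * (c + x ^ 2)) :
    HasDerivAt (fun y => (a + y ^ 2) / √((b + y ^ 2) * (c + y ^ 2)))
      (x * ((c - a) * (b + x ^ 2) + (b - a) * (c + x ^ 2)) / √((b + x ^ 2) * (c + x ^ 2)) ^ 3)
      x := by
  have hsq (d : ℝ) : HasDerivAt (fun y => d + y ^ 2) (2 * x) x := by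
    simpa using (hasDerivAt_pow 2 x).const_add d
  have hs : 0 < √((b + x ^ 2) * (c + x ^ 2)) := sqrt_pos.2 hx
  refine ((hsq a).div (((hsq b).mul (hsq c)).sqrt hx.ne') hs.ne').congr_deriv ?_
  simp only [Pi.mul_apply]
  field_simp
  rw [sq_sqrt hx.le]
  ring

theorem strictMonoOn_div_sqrt_mul_sq_add {a b c : ℝ} (hb : 0 ≤ b) (hc : 0 ≤ c) (hab : a ≤ b)
    (hac : a ≤ c) (habc : 2 * a < b + c) :
    StrictMonoOn (fun y => (a + y ^ 2) / √((b + y ^ 2) * (c + y ^ 2))) (Set.Ioi 0) := by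
  have hpos {x : ℝ} (hx : x ∈ Set.Ioi (0 : ℝ)) : 0 < (b + x ^ 2) * (c + x ^ 2) := by
    have : (0 : ℝ) < x := hx
    positivity
  refine strictMonoOn_of_deriv_pos (convex_Ioi 0) (fun x hx => ?_) (fun x hx => ?_)
  · exact (hasDerivAt_div_sqrt_mul_sq_add (hpos hx)).continuousAt.continuousWithinAt
  · rw [interior_Ioi] at hx
    rw [(hasDerivAt_div_sqrt_mul_sq_add (hpos hx)).deriv]
    have hx0 : (0 : ℝ) < x := hx
    have hnum : 0 < (c - a) * (b + x ^ 2) + (b - a) * (c + x ^ 2) := by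
      nlinarith [mul_nonneg (sub_nonneg.2 hac) hb, mul_nonneg (sub_nonneg.2 hab) hc,
        mul_pos hx0 hx0]
    have hs : 0 < √((b + x ^ 2) * (c + x ^ 2)) := sqrt_pos.2 (hpos hx)
    positivity

/-- h-monotonicity of the angular factor (eq. (33) of the paper): for fixed
`r ∈ [0, R]`, the map `h ↦ 1 + (r² − R·r + h²)/√((r²+h²)·((R−r)²+h²))` is
strictly increasing on `(0, ∞)`. -/
theorem angular_factor_h_monotone (R r : ℝ) (hR : 0 < R) (hr0 : 0 ≤ r) (hrR : r ≤ R) :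
    StrictMonoOn
      (fun h : ℝ => 1 + (r ^ 2 - R * r + h ^ 2)
        / Real.sqrt ((r ^ 2 + h ^ 2) * ((R - r) ^ 2 + h ^ 2)))
      (Set.Ioi 0) := by
  have hmono := strictMonoOn_div_sqrt_mul_sq_add (a := r ^ 2 - R * r) (b := r ^ 2)
    (c := (R - r) ^ 2) (sq_nonneg r) (sq_nonneg (R - r)) (by nlinarith) (by nlinarith)
    (by nlinarith)
  exact hmono.const_add 1
end

section
/- Let R > 0, 0 ≤ r ≤ R, h_t ≥ 0, h_r ≥ 0, h > max(h_t, h_r), and let q_u ≥ 1 be a real number. Define F : [0, ∞) → ℝ by F(l) = ( 1 + ((h − h_t)·(h − h_r) − √((r² + l²)·((R − r)² + l²))) / √((r² + l² + (h − h_t)²)·((R − r)² + l² + (h − h_r)²)) )^{q_u} / ((r² + l² + (h − h_t)²)·((R − r)² + l² + (h − h_r)²)). Then F is strictly decreasing on [0, ∞). -/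
/-!
Write `a = h - h_t`, `b = h - h_r` and `u = l²`. The bracket is `1 + cos (α + β)`, where `α` and
`β` are the angles between the vertical and the lines from the RIS to the transmitter and the
receiver, so it is positive. Moving the RIS away (`u` growing) flattens both lines: `cos α` and
`cos β` decrease while `sin α` and `sin β` increase, so the bracket decreases, whereas the
denominator, a product of two squared distances, strictly increases.
-/

open Real Set

/- Cosine and sine of the angle between the vertical and the line to a point lying `a` below and
at squared horizontal distance `w` (the paper's `α`, `β`). -/
noncomputable def angleCos (a w : ℝ) : ℝ := a / √(w + a ^ 2)

noncomputable def angleSin (a w : ℝ) : ℝ := √w / √(w + a ^ 2)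

lemma angleCos_nonneg {a : ℝ} (ha : 0 ≤ a) (w : ℝ) : 0 ≤ angleCos a w := by
  unfold angleCos; positivity

lemma angleSin_nonneg (a w : ℝ) : 0 ≤ angleSin a w := by
  unfold angleSin; positivity

lemma angleSin_lt_one {a w : ℝ} (ha : 0 < a) (hw : 0 ≤ w) : angleSin a w < 1 := by
  rw [angleSin, div_lt_one (by positivity)]
  exact sqrt_lt_sqrt hw (lt_add_of_pos_right w (pow_pos ha 2))

lemma angleCos_antitoneOn {a : ℝ} (ha : 0 < a) : AntitoneOn (angleCos a) (Ici 0) := by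
  intro u (hu : 0 ≤ u) v _ huv
  unfold angleCos
  gcongr

lemma angleSin_monotoneOn {a : ℝ} (ha : 0 < a) : MonotoneOn (angleSin a) (Ici 0) := by
  intro u (hu : 0 ≤ u) v (hv : 0 ≤ v) huv
  unfold angleSin
  rw [div_le_div_iff₀ (by positivity) (by positivity), ← sqrt_mul hu, ← sqrt_mul hv]
  apply sqrt_le_sqrt
  nlinarith [mul_le_mul_of_nonneg_right huv (sq_nonneg a)]

lemma div_sqrt_eq_angleCos_mul_sub_angleSin_mul (a b : ℝ) {w : ℝ} (hw : 0 ≤ w) (x : ℝ) :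
    (a * b - √(w * x)) / √((w + a ^ 2) * (x + b ^ 2)) =
      angleCos a w * angleCos b x - angleSin a w * angleSin b x := by
  rw [sqrt_mul hw, sqrt_mul (by positivity), sub_div, angleCos, angleCos, angleSin, angleSin,
    div_mul_div_comm, div_mul_div_comm]

/-- The bracket of the channel gain as a function of `u = l²`, with `p = r²` and `q = (R - r)²`. -/
noncomputable def gainBracket (a b p q u : ℝ) : ℝ :=
  1 + (a * b - √((p + u) * (q + u))) / √((p + u + a ^ 2) * (q + u + b ^ 2))

lemma gainBracket_eq {p u : ℝ} (a b q : ℝ) (hp : 0 ≤ p) (hu : 0 ≤ u) :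
    gainBracket a b p q u =
      1 + (angleCos a (p + u) * angleCos b (q + u) - angleSin a (p + u) * angleSin b (q + u)) := by
  rw [gainBracket, div_sqrt_eq_angleCos_mul_sub_angleSin_mul a b (by positivity)]

lemma gainBracket_pos {a b p q u : ℝ} (ha : 0 < a) (hb : 0 < b) (hp : 0 ≤ p) (hq : 0 ≤ q)
    (hu : 0 ≤ u) : 0 < gainBracket a b p q u := by
  have hcos := mul_nonneg (angleCos_nonneg ha.le (p + u)) (angleCos_nonneg hb.le (q + u))
  have hsin : angleSin a (p + u) * angleSin b (q + u) < 1 :=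
    mul_lt_one_of_nonneg_of_lt_one_left (angleSin_nonneg _ _) (angleSin_lt_one ha (by positivity))
      (angleSin_lt_one hb (by positivity)).le
  rw [gainBracket_eq a b q hp hu]
  linarith

lemma gainBracket_antitoneOn {a b p q : ℝ} (ha : 0 < a) (hb : 0 < b) (hp : 0 ≤ p) (hq : 0 ≤ q) :
    AntitoneOn (gainBracket a b p q) (Ici 0) := by
  intro u (hu : 0 ≤ u) v (hv : 0 ≤ v) huv
  have hpu : p + u ∈ Ici 0 := show 0 ≤ p + u by positivity
  have hpv : p + v ∈ Ici 0 := show 0 ≤ p + v by positivity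
  have hqu : q + u ∈ Ici 0 := show 0 ≤ q + u by positivity
  have hqv : q + v ∈ Ici 0 := show 0 ≤ q + v by positivity
  have hcos : angleCos a (p + v) * angleCos b (q + v) ≤ angleCos a (p + u) * angleCos b (q + u) :=
    mul_le_mul (angleCos_antitoneOn ha hpu hpv (by linarith))
      (angleCos_antitoneOn hb hqu hqv (by linarith)) (angleCos_nonneg hb.le _)
      (angleCos_nonneg ha.le _)
  have hsin : angleSin a (p + u) * angleSin b (q + u) ≤ angleSin a (p + v) * angleSin b (q + v) :=
    mul_le_mul (angleSin_monotoneOn ha hpu hpv (by linarith))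
      (angleSin_monotoneOn hb hqu hqv (by linarith)) (angleSin_nonneg _ _) (angleSin_nonneg _ _)
  rw [gainBracket_eq a b q hp hu, gainBracket_eq a b q hp hv]
  linarith

lemma strictMonoOn_add_add_mul_add_add {p q c d : ℝ} (hp : 0 ≤ p) (hq : 0 ≤ q) (hc : 0 ≤ c)
    (hd : 0 ≤ d) : StrictMonoOn (fun u => (p + u + c) * (q + u + d)) (Ici 0) := by
  intro u (hu : 0 ≤ u) v _ huv
  exact mul_lt_mul'' (by linarith) (by linarith) (by positivity) (by positivity)

lemma AntitoneOn.rpow_div_strictMonoOn {α : Type*} [Preorder α] {s : Set α} {g D : α → ℝ} {q : ℝ}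
    (hg : AntitoneOn g s) (hg₀ : ∀ x ∈ s, 0 < g x) (hD : StrictMonoOn D s)
    (hD₀ : ∀ x ∈ s, 0 < D x) (hq : 0 ≤ q) : StrictAntiOn (fun x => g x ^ q / D x) s :=
  fun x hx y hy hxy =>
  calc g y ^ q / D y < g y ^ q / D x :=
        div_lt_div_of_pos_left (rpow_pos_of_pos (hg₀ y hy) q) (hD₀ x hx) (hD hx hy hxy)
    _ ≤ g x ^ q / D x := by
        gcongr
        · exact (hD₀ x hx).le
        · exact (hg₀ y hy).le
        · exact hg hx hy hxy.le

theorem ccg_strictAnti_in_l_general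
    (R r ht hr h qu : ℝ) (hh : max ht hr < h) (hqu : 1 ≤ qu) :
    StrictAntiOn
      (fun l : ℝ =>
        (1 + ((h - ht) * (h - hr)
              - Real.sqrt ((r ^ 2 + l ^ 2) * ((R - r) ^ 2 + l ^ 2)))
            / Real.sqrt ((r ^ 2 + l ^ 2 + (h - ht) ^ 2)
                * ((R - r) ^ 2 + l ^ 2 + (h - hr) ^ 2))) ^ qu
          / ((r ^ 2 + l ^ 2 + (h - ht) ^ 2)
              * ((R - r) ^ 2 + l ^ 2 + (h - hr) ^ 2)))
      (Set.Ici 0) := by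
  have ha : 0 < h - ht := sub_pos.2 ((le_max_left ht hr).trans_lt hh)
  have hb : 0 < h - hr := sub_pos.2 ((le_max_right ht hr).trans_lt hh)
  have hp : 0 ≤ r ^ 2 := sq_nonneg r
  have hq : 0 ≤ (R - r) ^ 2 := sq_nonneg (R - r)
  have hgain : StrictAntiOn (fun u => gainBracket (h - ht) (h - hr) (r ^ 2) ((R - r) ^ 2) u ^ qu
      / ((r ^ 2 + u + (h - ht) ^ 2) * ((R - r) ^ 2 + u + (h - hr) ^ 2))) (Ici 0) :=
    (gainBracket_antitoneOn ha hb hp hq).rpow_div_strictMonoOn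
      (fun _ hu => gainBracket_pos ha hb hp hq hu)
      (strictMonoOn_add_add_mul_add_add hp hq (sq_nonneg _) (sq_nonneg _))
      (fun u (hu : 0 ≤ u) => by positivity) (by linarith)
  exact hgain.comp_strictMonoOn (pow_left_strictMonoOn₀ two_ne_zero) fun l _ => sq_nonneg l

/-- Corollary 3 of the paper: the rotation-optimized composite channel gain
(up to a positive constant)
`F(l) = (1 + ((h−h_t)(h−h_r) − √((r²+l²)((R−r)²+l²)))
          /√((r²+l²+(h−h_t)²)((R−r)²+l²+(h−h_r)²)))^{q_u}
        /((r²+l²+(h−h_t)²)((R−r)²+l²+(h−h_r)²))`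
is strictly decreasing in the horizontal offset `l` on `[0, ∞)`. -/
theorem ccg_strictAnti_in_l
    (R r ht hr h qu : ℝ) (hR : 0 < R) (hr0 : 0 ≤ r) (hrR : r ≤ R)
    (hht : 0 ≤ ht) (hhr : 0 ≤ hr) (hh : max ht hr < h) (hqu : 1 ≤ qu) :
    StrictAntiOn
      (fun l : ℝ =>
        (1 + ((h - ht) * (h - hr)
              - Real.sqrt ((r ^ 2 + l ^ 2) * ((R - r) ^ 2 + l ^ 2)))
            / Real.sqrt ((r ^ 2 + l ^ 2 + (h - ht) ^ 2)
                * ((R - r) ^ 2 + l ^ 2 + (h - hr) ^ 2))) ^ qu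
          / ((r ^ 2 + l ^ 2 + (h - ht) ^ 2)
              * ((R - r) ^ 2 + l ^ 2 + (h - hr) ^ 2)))
      (Set.Ici 0) :=
  ccg_strictAnti_in_l_general R r ht hr h qu hh hqu
end
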